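/- Let G be a countable group and A a finite set with |A| ≥ 2. For every ε > 0, the set of ε-minimal shifts is open in the space 𝒮; consequently the set of shifts S ∈ 𝒮 on which the G-action is minimal is a G_δ subset of 𝒮. -/

import Mathlib

open scoped Pointwise

/-- The left-translation action of `G` on configurations: `(g • s)(h) = s (g⁻¹ * h)`. -/
def shiftAct {G A : Type*} [Group G] (g : G) (s : G → A) : G → A :=
  fun h => s (g⁻¹ * h)

/-- A shift: a nonempty, closed, `G`-invariant subset of the full shift `A^G` (with the
product topology and the left-translation action). -/
def IsShift {G A : Type*} [Group G] [TopologicalSpace A] (S : Set (G → A)) : Prop :=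
  S.Nonempty ∧ IsClosed S ∧ ∀ s ∈ S, ∀ g : G, shiftAct g s ∈ S

/-- A shift `S ⊆ A^G` is strongly irreducible if there is a finite `X ⊆ G` containing the
identity such that for all `E₁, E₂ ⊆ G` with `E₁X ∩ E₂X = ∅` and all `s₁, s₂ ∈ S` there is
`s ∈ S` agreeing with `s₁` on `E₁` and with `s₂` on `E₂`. -/
def StronglyIrreducible {G A : Type*} [Group G] (S : Set (G → A)) : Prop :=
  ∃ X : Finset G, (1 : G) ∈ X ∧
    ∀ E₁ E₂ : Set G, (E₁ * (X : Set G)) ∩ (E₂ * (X : Set G)) = ∅ →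
      ∀ s₁ ∈ S, ∀ s₂ ∈ S, ∃ s ∈ S, (∀ a ∈ E₁, s a = s₁ a) ∧ (∀ a ∈ E₂, s a = s₂ a)

open scoped Classical in
/-- The metric on `A^G` induced by an enumeration `G = {g₁, g₂, …}` (here `e n = g_{n+1}`):
`d(s, t) = 1 / min {n ≥ 1 : s gₙ ≠ t gₙ}` for `s ≠ t`, and `d(s, s) = 0`. -/
noncomputable def confDist {G A : Type*} (e : ℕ → G) (s t : G → A) : ℝ :=
  if s = t then 0
  else 1 / (((sInf {n : ℕ | s (e n) ≠ t (e n)} : ℕ) : ℝ) + 1)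

/-- The space of shifts in `A^G`. -/
abbrev ShiftSpace (G A : Type*) [Group G] [TopologicalSpace A] : Type _ :=
  {S : Set (G → A) // IsShift S}

/-- Two sets of configurations agree on `F ⊆ G` if they have the same sets of restrictions
to `F`. -/
def AgreeOn {G A : Type*} (F : Set G) (S T : Set (G → A)) : Prop :=
  ∀ p : G → A, (∃ s ∈ S, ∀ x ∈ F, s x = p x) ↔ (∃ t ∈ T, ∀ x ∈ F, t x = p x)

open scoped Classical in
/-- The metric on the space of shifts: `d(S, T) = 1/(n+1)` where `n` is the largest index
such that `S` and `T` agree on `{g₁, …, gₙ}` (with `e k = g_{k+1}`), and `d(S, T) = 0` if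
`S = T`. -/
noncomputable def shiftSpaceDist {G A : Type*} [Group G] [TopologicalSpace A] (e : ℕ → G)
    (S T : ShiftSpace G A) : ℝ :=
  if S = T then 0
  else 1 / (((sSup {n : ℕ | AgreeOn {g : G | ∃ k < n, e k = g} S.1 T.1} : ℕ) : ℝ) + 1)

/-- The metric topology on the space of shifts, generated by the open balls of the metric
`shiftSpaceDist`. -/
noncomputable def shiftSpaceTopology (G A : Type*) [Group G] [TopologicalSpace A]
    (e : ℕ → G) : TopologicalSpace (ShiftSpace G A) :=
  TopologicalSpace.generateFrom
    {U : Set (ShiftSpace G A) |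
      ∃ (S : ShiftSpace G A) (ε : ℝ), 0 < ε ∧ U = {T | shiftSpaceDist e S T < ε}}

/-- The space `𝒮`: the closure, in the space of shifts, of the strongly irreducible shifts,
with the `|A|` singleton (constant-configuration) shifts removed. -/
def scriptS (G A : Type*) [Group G] [TopologicalSpace A] (e : ℕ → G) :
    Set (ShiftSpace G A) :=
  @closure _ (shiftSpaceTopology G A e) {S : ShiftSpace G A | StronglyIrreducible S.1} \
    {S : ShiftSpace G A | ∃ a : A, S.1 = {fun _ => a}}

/-- The subspace topology on `𝒮`. -/
noncomputable def scriptSTopology (G A : Type*) [Group G] [TopologicalSpace A]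
    (e : ℕ → G) : TopologicalSpace ↥(scriptS G A e) :=
  TopologicalSpace.induced Subtype.val (shiftSpaceTopology G A e)

/-- The action of `G` on a shift `S` is `ε`-minimal if for all `s, t ∈ S` there is `g ∈ G`
with `d(g • s, t) < ε`. -/
def EpsMinimal {G A : Type*} [Group G] (e : ℕ → G) (ε : ℝ) (S : Set (G → A)) : Prop :=
  ∀ s ∈ S, ∀ t ∈ S, ∃ g : G, confDist e (shiftAct g s) t < ε

/-!
Let `F` be the first `⌊1/ε⌋` coordinates. If `S` is `ε`-minimal, compactness of `S × S` yields
a finite `K ⊆ G` such that any two points of `S` are matched on `F` by a translate from `K`.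
This property only depends on the patterns of `S` on the finite window `F ∪ K⁻¹F`, and shifts
close to `S` have the same patterns there, so they are `ε`-minimal too. Minimality is the
countable intersection of the `1/(n+1)`-minimality conditions.
-/

open Set Function Topology

variable {G A : Type*}

theorem confDist_lt_iff {e : ℕ → G} (he : Surjective e) {ε : ℝ} (hε : 0 < ε)
    (s t : G → A) :
    confDist e s t < ε ↔ EqOn s t (e '' Iio ⌊1 / ε⌋₊) := by
  unfold confDist
  split_ifs with hst
  · simp only [hst, hε, eqOn_refl]
  · have hne : {n | s (e n) ≠ t (e n)}.Nonempty := by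
      obtain ⟨g, hg⟩ := ne_iff.mp hst
      obtain ⟨n, rfl⟩ := he g
      exact ⟨n, hg⟩
    rw [one_div_lt (by positivity) hε, ← Nat.cast_add_one, ← Nat.floor_lt (by positivity),
      Nat.lt_succ_iff, le_csInf_iff'' hne, EqOn, forall_mem_image]
    exact forall_congr' fun n => not_imp_comm.trans (imp_congr_left not_le)

theorem AgreeOn.mono {F F' : Set G} {S T : Set (G → A)} (h : AgreeOn F S T) (hF : F' ⊆ F) :
    AgreeOn F' S T := by
  have key : ∀ {S T : Set (G → A)}, AgreeOn F S T → ∀ s ∈ S, ∃ t ∈ T, EqOn t s F' :=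
    fun h s hs => let ⟨t, ht, hts⟩ := (h s).mp ⟨s, hs, fun _ _ => rfl⟩
      ⟨t, ht, fun x hx => hts x (hF hx)⟩
  have hsymm : AgreeOn F T S := fun p => (h p).symm
  refine fun p => ⟨fun ⟨s, hs, hsp⟩ => ?_, fun ⟨t, ht, htp⟩ => ?_⟩
  · obtain ⟨t, ht, hts⟩ := key h s hs
    exact ⟨t, ht, fun x hx => (hts hx).trans (hsp x hx)⟩
  · obtain ⟨s, hs, hst⟩ := key hsymm t ht
    exact ⟨s, hs, fun x hx => (hst hx).trans (htp x hx)⟩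

theorem agreeOn_empty {S T : Set (G → A)} (hS : S.Nonempty) (hT : T.Nonempty) :
    AgreeOn ∅ S T := fun _ =>
  ⟨fun _ => let ⟨t, ht⟩ := hT; ⟨t, ht, fun _ h => h.elim⟩,
    fun _ => let ⟨s, hs⟩ := hS; ⟨s, hs, fun _ h => h.elim⟩⟩

section Configurations

variable [Group G]

def AlignedBy (K F : Set G) (S : Set (G → A)) : Prop :=
  ∀ s ∈ S, ∀ t ∈ S, ∃ g ∈ K, EqOn (shiftAct g s) t F

theorem AlignedBy.mono {K K' F : Set G} {S : Set (G → A)} (h : AlignedBy K F S) (hK : K ⊆ K') :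
    AlignedBy K' F S := fun s hs t ht =>
  let ⟨g, hg, hgst⟩ := h s hs t ht
  ⟨g, hK hg, hgst⟩

theorem epsMinimal_iff_alignedBy_univ {e : ℕ → G} (he : Surjective e) {ε : ℝ} (hε : 0 < ε)
    (S : Set (G → A)) :
    EpsMinimal e ε S ↔ AlignedBy univ (e '' Iio ⌊1 / ε⌋₊) S := by
  simp only [EpsMinimal, AlignedBy, confDist_lt_iff he hε, mem_univ, true_and]

theorem EpsMinimal.mono {e : ℕ → G} {ε δ : ℝ} {S : Set (G → A)} (h : EpsMinimal e ε S)
    (hεδ : ε ≤ δ) : EpsMinimal e δ S := fun s hs t ht =>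
  (h s hs t ht).imp fun _ hg => hg.trans_le hεδ

theorem forall_epsMinimal_iff (e : ℕ → G) (S : Set (G → A)) :
    (∀ ε : ℝ, 0 < ε → EpsMinimal e ε S) ↔
      ∀ n : ℕ, EpsMinimal e (1 / ((n : ℝ) + 1)) S := by
  refine ⟨fun h n => h _ (by positivity), fun h ε hε => ?_⟩
  obtain ⟨n, hn⟩ := exists_nat_one_div_lt hε
  exact (h n).mono hn.le

theorem AlignedBy.exists_finset [TopologicalSpace A] [DiscreteTopology A] {F : Set G}
    {S : Set (G → A)} (hS : IsCompact S) (hF : F.Finite) (h : AlignedBy univ F S) :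
    ∃ K : Finset G, AlignedBy K F S := by
  let U : G → Set ((G → A) × (G → A)) := fun g => {p | EqOn (shiftAct g p.1) p.2 F}
  have hU : ∀ g, IsOpen (U g) := fun g => by
    simp only [U, EqOn, ofPred_forall]
    exact hF.isOpen_biInter fun x _ =>
      IsOpen.preimage (f := fun p : (G → A) × (G → A) => (p.1 (g⁻¹ * x), p.2 x)) (by fun_prop)
        (isOpen_discrete {q : A × A | q.1 = q.2})
  have hcover : S ×ˢ S ⊆ ⋃ g, U g := fun ⟨s, t⟩ ⟨hs, ht⟩ =>
    let ⟨g, _, hg⟩ := h s hs t ht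
    mem_iUnion.mpr ⟨g, hg⟩
  obtain ⟨K, hK⟩ := (hS.prod hS).elim_finite_subcover U hU hcover
  refine ⟨K, fun s hs t ht => ?_⟩
  obtain ⟨g, hg, hgst⟩ := mem_iUnion₂.mp (hK (mk_mem_prod hs ht))
  exact ⟨g, hg, hgst⟩

theorem AlignedBy.of_agreeOn {K F W : Set G} {S T : Set (G → A)} (h : AlignedBy K F S)
    (hFW : F ⊆ W) (hKFW : K⁻¹ * F ⊆ W) (hST : AgreeOn W S T) : AlignedBy K F T := by
  intro s' hs' t' ht'
  obtain ⟨s, hs, hss'⟩ := (hST s').mpr ⟨s', hs', fun _ _ => rfl⟩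
  obtain ⟨t, ht, htt'⟩ := (hST t').mpr ⟨t', ht', fun _ _ => rfl⟩
  obtain ⟨g, hg, hgst⟩ := h s hs t ht
  refine ⟨g, hg, fun x hx => ?_⟩
  calc shiftAct g s' x = shiftAct g s x :=
        (hss' _ (hKFW (mul_mem_mul (inv_mem_inv.mpr hg) hx))).symm
    _ = t x := hgst hx
    _ = t' x := htt' x (hFW hx)

end Configurations

theorem Function.Surjective.exists_subset_image_Iio {α : Type*} {e : ℕ → α}
    (he : Surjective e) {W : Set α} (hW : W.Finite) : ∃ L, W ⊆ e '' Iio L := by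
  obtain ⟨M, hM⟩ := (hW.image (surjInv he)).bddAbove
  exact ⟨M + 1, fun x hx =>
    ⟨surjInv he x, Nat.lt_succ_of_le (hM (mem_image_of_mem _ hx)), surjInv_eq he x⟩⟩

section ShiftSpace

variable [Group G] [TopologicalSpace A]

theorem shiftSpaceDist_self (e : ℕ → G) (S : ShiftSpace G A) : shiftSpaceDist e S S = 0 :=
  if_pos rfl

theorem isOpen_shiftSpaceDist_lt (e : ℕ → G) (S : ShiftSpace G A) {r : ℝ} (hr : 0 < r) :
    IsOpen[shiftSpaceTopology G A e] {T | shiftSpaceDist e S T < r} :=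
  TopologicalSpace.isOpen_generateFrom_of_mem ⟨S, r, hr, rfl⟩

theorem agreeOn_of_shiftSpaceDist_lt {e : ℕ → G} {S T : ShiftSpace G A} {L : ℕ}
    (h : shiftSpaceDist e S T < 1 / ((L : ℝ) + 1)) : AgreeOn (e '' Iio L) S.1 T.1 := by
  by_cases hST : S = T
  · subst hST
    exact fun _ => Iff.rfl
  let N := {n : ℕ | AgreeOn {g : G | ∃ k < n, e k = g} S.1 T.1}
  suffices ∃ n ∈ N, L ≤ n from
    let ⟨n, hn, hLn⟩ := this
    AgreeOn.mono hn (image_mono (Iio_subset_Iio hLn))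
  by_contra! hN
  have h0 : 0 ∈ N :=
    (agreeOn_empty S.2.1 T.2.1).mono fun _ ⟨k, hk, _⟩ => absurd hk k.not_lt_zero
  have hmem : sSup N ∈ N := Nat.sSup_mem ⟨0, h0⟩ ⟨L, fun n hn => (hN n hn).le⟩
  rw [shiftSpaceDist, if_neg hST, one_div_lt_one_div (by positivity) (by positivity)] at h
  have hL : (L : ℝ) < sSup N := by linarith
  exact (hN _ hmem).not_ge (by exact_mod_cast hL.le)

theorem isOpen_setOf_epsMinimal [Finite A] [DiscreteTopology A] {e : ℕ → G}
    (he : Surjective e) {ε : ℝ} (hε : 0 < ε) :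
    IsOpen[shiftSpaceTopology G A e] {T : ShiftSpace G A | EpsMinimal e ε T.1} := by
  let := shiftSpaceTopology G A e
  refine isOpen_iff_forall_mem_open.mpr fun S hS => ?_
  set F := e '' Iio ⌊1 / ε⌋₊
  have hF : F.Finite := (finite_Iio _).image e
  rw [mem_ofPred_eq, epsMinimal_iff_alignedBy_univ he hε] at hS
  obtain ⟨K, hK⟩ := hS.exists_finset S.2.2.1.isCompact hF
  obtain ⟨L, hL⟩ := he.exists_subset_image_Iio (hF.union (K.finite_toSet.inv.mul hF))
  have hball := isOpen_shiftSpaceDist_lt e S (r := 1 / ((L : ℝ) + 1)) (by positivity)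
  refine ⟨_, fun T hT => ?_, hball, by simp only [mem_ofPred_eq, shiftSpaceDist_self]; positivity⟩
  rw [mem_ofPred_eq, epsMinimal_iff_alignedBy_univ he hε]
  exact (hK.of_agreeOn subset_union_left subset_union_right
    ((agreeOn_of_shiftSpaceDist_lt hT).mono hL)).mono (subset_univ _)

end ShiftSpace

theorem epsMinimal_isOpen_and_minimal_isGδ_general
    (G : Type) [Group G]
    (A : Type) [Fintype A] [TopologicalSpace A] [DiscreteTopology A]
    (e : ℕ → G) (he : Function.Surjective e) :
    (∀ ε : ℝ, 0 < ε →
      @IsOpen ↥(scriptS G A e) (scriptSTopology G A e)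
        {S : ↥(scriptS G A e) | EpsMinimal e ε S.1.1}) ∧
    @IsGδ ↥(scriptS G A e) (scriptSTopology G A e)
      {S : ↥(scriptS G A e) | ∀ ε : ℝ, 0 < ε → EpsMinimal e ε S.1.1} := by
  let := shiftSpaceTopology G A e
  let := scriptSTopology G A e
  have hopen : ∀ ε : ℝ, 0 < ε → IsOpen {S : ↥(scriptS G A e) | EpsMinimal e ε S.1.1} :=
    fun ε hε => isOpen_induced (isOpen_setOf_epsMinimal he hε)
  refine ⟨hopen, ?_⟩
  have hiInter : {S : ↥(scriptS G A e) | ∀ ε : ℝ, 0 < ε → EpsMinimal e ε S.1.1} =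
      ⋂ n : ℕ, {S | EpsMinimal e (1 / ((n : ℝ) + 1)) S.1.1} := by
    ext S
    simp only [mem_iInter, mem_ofPred_eq, forall_epsMinimal_iff]
  rw [hiInter]
  exact .iInter fun n => (hopen _ (by positivity)).isGδ

/-- For every `ε > 0` the set of `ε`-minimal shifts is open in `𝒮`; consequently the set of
shifts in `𝒮` on which the `G`-action is minimal (equivalently, `ε`-minimal for every
`ε > 0`) is a `G_δ` subset of `𝒮`. -/
theorem epsMinimal_isOpen_and_minimal_isGδ
    (G : Type) [Group G] [Countable G]
    (A : Type) [Fintype A] [TopologicalSpace A] [DiscreteTopology A]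
    (hA : 2 ≤ Fintype.card A)
    (e : ℕ → G) (he : Function.Surjective e) :
    (∀ ε : ℝ, 0 < ε →
      @IsOpen ↥(scriptS G A e) (scriptSTopology G A e)
        {S : ↥(scriptS G A e) | EpsMinimal e ε S.1.1}) ∧
    @IsGδ ↥(scriptS G A e) (scriptSTopology G A e)
      {S : ↥(scriptS G A e) | ∀ ε : ℝ, 0 < ε → EpsMinimal e ε S.1.1} :=
  epsMinimal_isOpen_and_minimal_isGδ_general G A e he
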